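/- The functions u(x,y) = (√3/2)(x² + y²) and u(x,y) = −(√3/2)(x² + y²) satisfy the vanishing-E₁ graph equation ((u_y+x)/D)D_x − ((u_x−y)/D)D_y − (1/6)(Δu − ((u_x−y)/D)D_x − ((u_y+x)/D)D_y)² − 1/2 = 0 at every point (x,y) ≠ (0,0), where D := ((u_x−y)² + (u_y+x)²)^{1/2} (for these functions D = 2(x²+y²)^{1/2} > 0 off the origin). -/

import Mathlib

/-! For `u = c (x² + y²)` one finds `D = √(4c² + 1) · r` with `r = √(x² + y²)`, so `D` is radial.
Then the first two terms of the equation add up to `1` and the bracket reduces to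
`Δu − 2c = 2c`, whence the left-hand side equals `1/2 − (2/3) c²` off the origin; it vanishes
exactly when `c² = 3/4`. -/

/-- `D_u = ((u_x − y)² + (u_y + x)²)^{1/2}` for a graph `t = u(x,y)` in the Heisenberg
group. -/
noncomputable def Dgraph (u : ℝ × ℝ → ℝ) (p : ℝ × ℝ) : ℝ :=
  Real.sqrt ((fderiv ℝ u p (1, 0) - p.2) ^ 2 + (fderiv ℝ u p (0, 1) + p.1) ^ 2)

/-- Left-hand side of the vanishing-E₁ graph equation
`((u_y+x)/D)D_x − ((u_x−y)/D)D_y − (1/6)(Δu − ((u_x−y)/D)D_x − ((u_y+x)/D)D_y)² − 1/2`. -/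
noncomputable def E1lhs (u : ℝ × ℝ → ℝ) (p : ℝ × ℝ) : ℝ :=
  ((fderiv ℝ u p (0, 1) + p.1) / Dgraph u p) * fderiv ℝ (Dgraph u) p (1, 0)
    - ((fderiv ℝ u p (1, 0) - p.2) / Dgraph u p) * fderiv ℝ (Dgraph u) p (0, 1)
    - (1 / 6) * ((fderiv ℝ (fun q => fderiv ℝ u q (1, 0)) p (1, 0)
          + fderiv ℝ (fun q => fderiv ℝ u q (0, 1)) p (0, 1))
        - ((fderiv ℝ u p (1, 0) - p.2) / Dgraph u p) * fderiv ℝ (Dgraph u) p (1, 0)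
        - ((fderiv ℝ u p (0, 1) + p.1) / Dgraph u p) * fderiv ℝ (Dgraph u) p (0, 1)) ^ 2
    - 1 / 2

open Real ContinuousLinearMap

def paraboloid (c : ℝ) (q : ℝ × ℝ) : ℝ := c * (q.1 ^ 2 + q.2 ^ 2)

lemma hasFDerivAt_sq_add_sq (p : ℝ × ℝ) :
    HasFDerivAt (fun q : ℝ × ℝ => q.1 ^ 2 + q.2 ^ 2)
      ((2 * p.1) • fst ℝ ℝ ℝ + (2 * p.2) • snd ℝ ℝ ℝ) p := by
  refine (((hasFDerivAt_fst (p := p)).pow 2).add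
    ((hasFDerivAt_snd (p := p)).pow 2)).congr_fderiv ?_
  ext <;> simp

lemma sq_add_sq_pos {p : ℝ × ℝ} (hp : p ≠ 0) : 0 < p.1 ^ 2 + p.2 ^ 2 := by
  have : p.1 ≠ 0 ∨ p.2 ≠ 0 := by
    contrapose! hp
    exact Prod.ext hp.1 hp.2
  rcases this with h | h <;> positivity

variable (c : ℝ)

lemma fderiv_paraboloid_apply (p v : ℝ × ℝ) :
    fderiv ℝ (paraboloid c) p v = 2 * c * (p.1 * v.1 + p.2 * v.2) := by
  unfold paraboloid
  rw [((hasFDerivAt_sq_add_sq p).const_mul c).fderiv]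
  simp only [smul_add, add_apply, smul_apply, coe_fst', smul_eq_mul, coe_snd']
  ring

lemma fderiv_fderiv_paraboloid_fst (p : ℝ × ℝ) :
    fderiv ℝ (fun q => fderiv ℝ (paraboloid c) q (1, 0)) p (1, 0) = 2 * c := by
  simp only [fderiv_paraboloid_apply, mul_one, mul_zero, add_zero]
  simp [((hasFDerivAt_fst (𝕜 := ℝ) (p := p) (F := ℝ)).const_mul (2 * c)).fderiv]

lemma fderiv_fderiv_paraboloid_snd (p : ℝ × ℝ) :
    fderiv ℝ (fun q => fderiv ℝ (paraboloid c) q (0, 1)) p (0, 1) = 2 * c := by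
  simp only [fderiv_paraboloid_apply, mul_one, mul_zero, zero_add]
  simp [((hasFDerivAt_snd (𝕜 := ℝ) (p := p) (E := ℝ)).const_mul (2 * c)).fderiv]

lemma Dgraph_paraboloid :
    Dgraph (paraboloid c) = fun p => √(4 * c ^ 2 + 1) * √(p.1 ^ 2 + p.2 ^ 2) := by
  ext p
  rw [Dgraph, fderiv_paraboloid_apply, fderiv_paraboloid_apply, ← sqrt_mul (by positivity)]
  congr 1
  ring

lemma fderiv_Dgraph_paraboloid_apply {p : ℝ × ℝ} (hp : p ≠ 0) (v : ℝ × ℝ) :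
    fderiv ℝ (Dgraph (paraboloid c)) p v
      = √(4 * c ^ 2 + 1) * (p.1 * v.1 + p.2 * v.2) / √(p.1 ^ 2 + p.2 ^ 2) := by
  have hr : √(p.1 ^ 2 + p.2 ^ 2) ≠ 0 := (sqrt_pos.mpr (sq_add_sq_pos hp)).ne'
  rw [Dgraph_paraboloid,
    (((hasFDerivAt_sq_add_sq p).sqrt (sq_add_sq_pos hp).ne').const_mul _).fderiv]
  simp only [one_div, smul_add, add_apply, smul_apply, coe_fst', smul_eq_mul, coe_snd']
  field_simp

lemma E1lhs_paraboloid {p : ℝ × ℝ} (hp : p ≠ 0) :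
    E1lhs (paraboloid c) p = 1 / 2 - 2 / 3 * c ^ 2 := by
  rw [E1lhs, fderiv_fderiv_paraboloid_fst, fderiv_fderiv_paraboloid_snd,
    fderiv_Dgraph_paraboloid_apply c hp, fderiv_Dgraph_paraboloid_apply c hp,
    fderiv_paraboloid_apply, fderiv_paraboloid_apply, Dgraph_paraboloid]
  simp only [mul_zero, mul_one, add_zero, zero_add]
  set r := √(p.1 ^ 2 + p.2 ^ 2)
  have hr : 0 < r := sqrt_pos.mpr (sq_add_sq_pos hp)
  have hr2 : r ^ 2 = p.1 ^ 2 + p.2 ^ 2 := sq_sqrt (sq_add_sq_pos hp).le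
  field_simp
  linear_combination (-36 * r ^ 2 - 24 * c ^ 2 * (3 * r ^ 2 - (p.1 ^ 2 + p.2 ^ 2))) * hr2

variable {c}

lemma Dgraph_paraboloid_eq (hc : c ^ 2 = 3 / 4) (p : ℝ × ℝ) :
    Dgraph (paraboloid c) p = 2 * √(p.1 ^ 2 + p.2 ^ 2) := by
  rw [Dgraph_paraboloid, hc, show (4 : ℝ) * (3 / 4) + 1 = 2 ^ 2 by norm_num, sqrt_sq two_pos.le]

lemma E1lhs_paraboloid_eq_zero (hc : c ^ 2 = 3 / 4) {p : ℝ × ℝ} (hp : p ≠ 0) :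
    E1lhs (paraboloid c) p = 0 := by
  rw [E1lhs_paraboloid c hp, hc]
  norm_num

/-- the functions `u = ±(√3/2)(x² + y²)` satisfy the vanishing-E₁ graph
equation off the origin; for these functions `D = 2(x²+y²)^{1/2} > 0` there. -/
theorem stmt_17 :
    (∀ p : ℝ × ℝ, p ≠ 0 →
        E1lhs (fun q => (Real.sqrt 3 / 2) * (q.1 ^ 2 + q.2 ^ 2)) p = 0)
    ∧ (∀ p : ℝ × ℝ, p ≠ 0 →
        E1lhs (fun q => -(Real.sqrt 3 / 2) * (q.1 ^ 2 + q.2 ^ 2)) p = 0)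
    ∧ (∀ p : ℝ × ℝ, p ≠ 0 →
        Dgraph (fun q => (Real.sqrt 3 / 2) * (q.1 ^ 2 + q.2 ^ 2)) p
            = 2 * Real.sqrt (p.1 ^ 2 + p.2 ^ 2)
          ∧ Dgraph (fun q => -(Real.sqrt 3 / 2) * (q.1 ^ 2 + q.2 ^ 2)) p
            = 2 * Real.sqrt (p.1 ^ 2 + p.2 ^ 2)
          ∧ 0 < Dgraph (fun q => (Real.sqrt 3 / 2) * (q.1 ^ 2 + q.2 ^ 2)) p) := by
  have hc : (√3 / 2) ^ 2 = 3 / 4 := by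
    rw [div_pow, sq_sqrt (by norm_num)]
    norm_num
  have hc' : (-(√3 / 2)) ^ 2 = 3 / 4 := by rw [neg_sq, hc]
  refine ⟨fun _ hp => E1lhs_paraboloid_eq_zero hc hp, fun _ hp => E1lhs_paraboloid_eq_zero hc' hp,
    fun p hp => ⟨Dgraph_paraboloid_eq hc p, Dgraph_paraboloid_eq hc' p, ?_⟩⟩
  exact (mul_pos two_pos (sqrt_pos.mpr (sq_add_sq_pos hp))).trans_eq
    (Dgraph_paraboloid_eq hc p).symm
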